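/- For any set of blocks F ⊆ Σ_A^fin, the set X_F := X_F^inf ∪ X_F^fin is a shift space: it is closed in Σ_A, shift-invariant, and has the infinite-extension property. -/

import Mathlib

open Topology Filter Set

noncomputable section

/-- The set of finite and infinite sequences over the alphabet `A`, encoded as
functions `ℕ → Option A` which, once `none`, stay `none`. -/
def Sig (A : Type*) : Type _ :=
  {f : ℕ → Option A // ∀ n, f n = none → f (n + 1) = none}

namespace Sig

variable {A : Type*}

/-- The empty sequence `0⃗`. -/
def nil : Sig A := ⟨fun _ => none, fun _ _ => rfl⟩

/-- The length of a sequence, an extended natural number. -/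
def len (x : Sig A) : ℕ∞ := sInf {n : ℕ∞ | ∃ k : ℕ, n = (k : ℕ∞) ∧ x.1 k = none}

/-- The finite sequence determined by a list. -/
def ofList (w : List A) : Sig A :=
  ⟨fun n => w[n]?, fun n h => by
    rw [List.getElem?_eq_none_iff] at h ⊢
    omega⟩

/-- The shift map: delete the first entry. -/
def shift (x : Sig A) : Sig A := ⟨fun n => x.1 (n + 1), fun n h => x.2 _ h⟩

/-- The cylinder set `Z(w)` of all sequences beginning with the finite word `w`. -/
def cyl (w : List A) : Set (Sig A) := {z | ∀ i < w.length, z.1 i = w[i]?}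

/-- The generalized cylinder set `Z(w, F)`. -/
def cylF (w : List A) (F : Set A) : Set (Sig A) := cyl w \ ⋃ a ∈ F, cyl (w ++ [a])

/-- The space `X_A = A_∞^ℕ` where `A_∞` is the one-point compactification of the
discrete space `A`. -/
def XA (A : Type*) : Type _ := ℕ → OnePoint A

instance (A : Type*) : TopologicalSpace (XA A) :=
  letI : TopologicalSpace A := ⊥
  inferInstanceAs (TopologicalSpace (ℕ → OnePoint A))

/-- View a point of `A_∞` as an `Option A` (they are definitionally equal). -/
def toOpt (y : OnePoint A) : Option A := y

open Classical in
/-- The quotient map `Q : X_A → Σ_A`, cutting a sequence over `A_∞` at the first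
occurrence of `∞`. -/
def Q (x : XA A) : Sig A :=
  ⟨fun n => if ∃ i ≤ n, x i = OnePoint.infty then none else toOpt (x n), by
    intro n h
    dsimp only at h ⊢
    by_cases hex : ∃ i ≤ n, x i = OnePoint.infty
    · obtain ⟨i, hi, hxi⟩ := hex
      exact if_pos ⟨i, hi.trans (Nat.le_succ n), hxi⟩
    · rw [if_neg hex] at h
      have : x n = OnePoint.infty := h
      exact absurd ⟨n, le_refl n, this⟩ hex⟩

/-- The quotient topology on `Σ_A` induced by `Q`. -/
instance (A : Type*) : TopologicalSpace (Sig A) :=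
  TopologicalSpace.coinduced Q inferInstance

/-- `w` occurs as a subblock of the sequence `x`. -/
def IsSubblock (w : List A) (x : Sig A) : Prop :=
  ∃ k, ∀ i < w.length, x.1 (k + i) = w[i]?

/-- The set of blocks (finite subwords) of elements of `X`. -/
def blocks (X : Set (Sig A)) : Set (List A) := {w | ∃ x ∈ X, IsSubblock w x}

/-- A shift space: closed, shift invariant, with the infinite-extension property. -/
def IsShiftSpace (X : Set (Sig A)) : Prop :=
  IsClosed X ∧ (∀ x ∈ X, shift x ∈ X) ∧
    ∀ w : List A, ofList w ∈ X → {a : A | (X ∩ cyl (w ++ [a])).Nonempty}.Infinite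

/-- A shift space is row-finite if every symbol can be followed by only finitely
many symbols. -/
def RowFinite (X : Set (Sig A)) : Prop := ∀ a : A, {b : A | [a, b] ∈ blocks X}.Finite

/-- The set of infinite sequences avoiding all blocks from `F`. -/
def XFinf (F : Set (List A)) : Set (Sig A) :=
  {x | len x = ⊤ ∧ ∀ w ∈ F, ¬ IsSubblock w x}

/-- The set of finite sequences with infinitely many extensions into `X_F^inf`. -/
def XFfin (F : Set (List A)) : Set (Sig A) :=
  {x | ∃ w : List A, x = ofList w ∧
    {a : A | (XFinf F ∩ cyl (w ++ [a])).Nonempty}.Infinite}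

/-- The shift space `X_F` determined by the forbidden blocks `F`. -/
def XF (F : Set (List A)) : Set (Sig A) := XFinf F ∪ XFfin F

end Sig




namespace Sig

variable {A : Type*} {F : Set (List A)}

lemma ofList_inj {w w' : List A} (h : ofList w = ofList w') : w = w' := by
  apply List.ext_getElem?
  intro n
  exact congrFun (congrArg Subtype.val h) n

lemma len_eq_top_iff {x : Sig A} : len x = ⊤ ↔ ∀ k, x.1 k ≠ none := by
  unfold len
  rw [sInf_eq_top]
  constructor
  · intro h k hk
    exact (ENat.coe_ne_top k) (h _ ⟨k, rfl, hk⟩)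
  · rintro h n ⟨k, rfl, hk⟩
    exact absurd hk (h k)

lemma len_ofList_ne_top (w : List A) : len (ofList w) ≠ ⊤ := by
  intro h
  exact (len_eq_top_iff.1 h) w.length (List.getElem?_eq_none le_rfl)

lemma cyl_mono {w w' : List A} (h : w <+: w') : cyl w' ⊆ cyl w := by
  obtain ⟨t, rfl⟩ := h
  intro z hz i hi
  rw [hz i (by rw [List.length_append]; omega), List.getElem?_append_left hi]

lemma XFinf_cyl_empty {u w : List A} (hu : u ∈ F) (hsub : IsSubblock u (ofList w)) :
    XFinf F ∩ cyl w = ∅ := by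
  ext y
  simp only [Set.mem_inter_iff, Set.mem_empty_iff_false, iff_false, not_and]
  rintro ⟨-, hy2⟩ hcyl
  obtain ⟨k, hk⟩ := hsub
  refine hy2 u hu ⟨k, fun i hi => ?_⟩
  have h1 : (ofList w).1 (k + i) = u[i]? := hk i hi
  have hsome : u[i]? = some u[i] := List.getElem?_eq_getElem hi
  have h2 : k + i < w.length := by
    by_contra hcon
    have hn : w[k+i]? = none := List.getElem?_eq_none (by omega)
    rw [show (ofList w).1 (k+i) = w[k+i]? from rfl, hn, hsome] at h1
    cases h1
  calc y.1 (k + i) = w[k+i]? := hcyl _ h2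
    _ = u[i]? := h1

lemma Epoint {w w' : List A} {a : A}
    (hpre : (w ++ [a]) <+: w')
    (hne : ∃ b, (XFinf F ∩ cyl (w' ++ [b])).Nonempty) :
    (XFinf F ∩ cyl (w ++ [a])).Nonempty := by
  obtain ⟨b, y, hy, hcyl⟩ := hne
  exact ⟨y, hy, cyl_mono (hpre.trans (w'.prefix_append [b])) hcyl⟩

lemma shift_mem_XFinf {y : Sig A} (hy : y ∈ XFinf F) : shift y ∈ XFinf F := by
  obtain ⟨h1, h2⟩ := hy
  refine ⟨len_eq_top_iff.2 fun k => len_eq_top_iff.1 h1 (k + 1), fun u hu hsub => ?_⟩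
  obtain ⟨k, hk⟩ := hsub
  refine h2 u hu ⟨k + 1, fun i hi => ?_⟩
  have := hk i hi
  show y.1 (k + 1 + i) = u[i]?
  rw [show k + 1 + i = k + i + 1 by omega]
  exact this

lemma shift_ofList_cons (b : A) (u : List A) : shift (ofList (b :: u)) = ofList u := by
  apply Subtype.ext
  funext n
  show (b :: u)[n+1]? = u[n]?
  simp

lemma toOpt_eq_none {y : OnePoint A} : toOpt y = none ↔ y = OnePoint.infty := Iff.rfl

lemma Q_apply_neg (x : XA A) (n : ℕ) (h : ¬ ∃ i ≤ n, x i = OnePoint.infty) :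
    (Q x).1 n = toOpt (x n) := if_neg h

lemma Q_apply_pos (x : XA A) (n : ℕ) (h : ∃ i ≤ n, x i = OnePoint.infty) :
    (Q x).1 n = none := if_pos h

lemma isOpen_eval_eq (i : ℕ) (a : A) :
    IsOpen {x : XA A | x i = (a : OnePoint A)} := by
  letI : TopologicalSpace A := ⊥
  letI : DiscreteTopology A := ⟨rfl⟩
  have hcont : Continuous (fun x : XA A => x i) := continuous_apply i
  have hopen : IsOpen {(a : OnePoint A)} := by
    rw [show {(a : OnePoint A)} = (fun b : A => (b : OnePoint A)) '' {a} from by simp]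
    exact OnePoint.isOpen_image_coe.2 (isOpen_discrete _)
  exact hcont.isOpen_preimage _ hopen

/-- the open set `{∞} ∪ (Sᶜ)` at coordinate `i`, for `S` finite. -/
lemma isOpen_eval_V (i : ℕ) (S : Set A) (hS : S.Finite) :
    IsOpen {x : XA A | x i = OnePoint.infty ∨ ∃ b ∉ S, x i = (b : OnePoint A)} := by
  letI : TopologicalSpace A := ⊥
  letI : DiscreteTopology A := ⟨rfl⟩
  have hcont : Continuous (fun x : XA A => x i) := continuous_apply i
  have hV : IsOpen ({OnePoint.infty} ∪ ((fun b : A => (b : OnePoint A)) '' Sᶜ)) := by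
    rw [OnePoint.isOpen_iff_of_mem (s := {OnePoint.infty} ∪ ((fun b : A => (b : OnePoint A)) '' Sᶜ)) (Set.mem_union_left _ rfl)]
    have hpre : (fun b : A => (b : OnePoint A)) ⁻¹'
        ({OnePoint.infty} ∪ ((fun b : A => (b : OnePoint A)) '' Sᶜ)) = Sᶜ := by
      ext b
      simp only [Set.preimage_union, Set.mem_union, Set.mem_preimage, Set.mem_singleton_iff,
        Set.mem_compl_iff]
      constructor
      · rintro (h | h)
        · exact absurd h (OnePoint.coe_ne_infty b)
        · obtain ⟨c, hc, hcb⟩ := h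
          rwa [← OnePoint.coe_injective hcb]
      · intro h
        exact Or.inr ⟨b, h, rfl⟩
    rw [hpre, compl_compl]
    exact ⟨isClosed_discrete S, hS.isCompact⟩
  have := hcont.isOpen_preimage _ hV
  convert this using 1
  ext x
  simp only [Set.mem_setOf_eq, Set.mem_preimage, Set.mem_union, Set.mem_singleton_iff,
    Set.mem_image]
  constructor
  · rintro (h | ⟨b, hb, h⟩)
    · exact Or.inl h
    · exact Or.inr ⟨b, hb, h.symm⟩
  · rintro (h | ⟨b, hb, h⟩)
    · exact Or.inl h
    · exact Or.inr ⟨b, hb, h.symm⟩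


lemma XF_closed : IsClosed (XF F) := by
  classical
  rw [← isOpen_compl_iff]
  show IsOpen (Q ⁻¹' (XF F)ᶜ)
  rw [isOpen_iff_forall_mem_open]
  intro x hx
  have hx' : Q x ∉ XF F := hx
  by_cases hinf : ∃ i, x i = OnePoint.infty
  · -- x reaches infinity at minimal position m
    have hm : x (Nat.find hinf) = OnePoint.infty := Nat.find_spec hinf
    set m := Nat.find hinf with hmdef
    have hlt : ∀ i < m, x i ≠ OnePoint.infty := fun i hi => Nat.find_min hinf hi
    have hsome : ∀ i, i < m → (toOpt (x i)).isSome := by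
      intro i hi
      rw [Option.isSome_iff_ne_none]
      exact fun h => hlt i hi (toOpt_eq_none.1 h)
    set w : List A := List.ofFn (fun i : Fin m => (toOpt (x i.1)).get (hsome i.1 i.2)) with hwdef
    have hwlen : w.length = m := List.length_ofFn
    have hwget : ∀ n, ∀ hn : n < m, w[n]? = toOpt (x n) := by
      intro n hn
      rw [List.getElem?_eq_getElem (by omega), List.getElem_ofFn]
      exact Option.some_get _
    have hQx : ∀ (x' : XA A), (∀ i < m, x' i = x i) → x' m = OnePoint.infty →
        Q x' = ofList w := by
      intro x' h1 h2
      apply Subtype.ext; funext n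
      show (Q x').1 n = w[n]?
      rcases lt_or_ge n m with hn | hn
      · rw [Q_apply_neg x' n ?noinf, h1 n hn, hwget n hn]
        case noinf =>
          rintro ⟨i, hi, hxi⟩
          exact hlt i (by omega) (by rw [← h1 i (by omega)]; exact hxi)
      · rw [Q_apply_pos x' n ⟨m, hn, h2⟩, List.getElem?_eq_none (by omega)]
    have hQeq : Q x = ofList w := hQx x (fun _ _ => rfl) hm
    have hEfin : {a : A | (XFinf F ∩ cyl (w ++ [a])).Nonempty}.Finite := by
      rw [← Set.not_infinite]
      intro hE
      exact hx' (Or.inr ⟨w, hQeq, hE⟩)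
    refine ⟨(⋂ i ∈ Finset.range m, {x' : XA A | x' i = x i}) ∩
      {x' : XA A | x' m = OnePoint.infty ∨
        ∃ b ∉ {a : A | (XFinf F ∩ cyl (w ++ [a])).Nonempty}, x' m = (b : OnePoint A)},
      ?_, ?_, ?_⟩
    · rintro x' ⟨hU1, hU2⟩
      simp only [Set.mem_iInter] at hU1
      have h1 : ∀ i < m, x' i = x i := fun i hi => hU1 i (Finset.mem_range.2 hi)
      rcases hU2 with h2 | ⟨a, haE, h2⟩
      · have heq : Q x' = ofList w := hQx x' h1 h2
        show Q x' ∉ XF F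
        rw [heq, ← hQeq]
        exact hx'
      · -- x' m = a with a not extendable
        have hconcat : (w ++ [a])[m]? = some a := by
          rw [← hwlen]
          exact List.getElem?_concat_length
        have hnoinf : ∀ n, n ≤ m → ¬ ∃ i ≤ n, x' i = OnePoint.infty := by
          rintro n hn ⟨i, hi, hxi⟩
          rcases lt_or_ge i m with him | him
          · exact hlt i him (by rw [← h1 i him]; exact hxi)
          · have : i = m := by omega
            subst this
            rw [h2] at hxi
            exact OnePoint.coe_ne_infty a hxi
        have hpre1 : ∀ i < m + 1, (Q x').1 i = (w ++ [a])[i]? := by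
          intro i hi
          rw [Q_apply_neg x' i (hnoinf i (by omega))]
          rcases lt_or_ge i m with him | him
          · rw [h1 i him, List.getElem?_append_left (by omega : i < w.length), hwget i him]
          · have : i = m := by omega
            subst this
            rw [h2, hconcat]
            rfl
        have hlen1 : (w ++ [a]).length = m + 1 := by
          simp [List.length_append, hwlen]
        show Q x' ∉ XF F
        rintro (hXi | ⟨w', hw', hinfE⟩)
        · exact haE ⟨Q x', hXi, fun i hi => hpre1 i (by omega)⟩
        · have hQw' : ∀ n, (Q x').1 n = w'[n]? :=
            fun n => congrFun (congrArg Subtype.val hw') n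
          have hlen' : m + 1 ≤ w'.length := by
            by_contra hcon
            have hn : w'[m]? = none := List.getElem?_eq_none (by omega)
            have h3 := hpre1 m (by omega)
            rw [hQw' m, hn, hconcat] at h3
            cases h3
          have htake : w'.take (m + 1) = w ++ [a] := by
            apply List.ext_getElem?
            intro n
            rcases lt_or_ge n (m + 1) with hn | hn
            · rw [List.getElem?_take, if_pos hn, ← hQw' n, hpre1 n hn]
            · rw [List.getElem?_eq_none (le_trans (List.length_take_le _ _) hn),
                List.getElem?_eq_none (by omega)]
          have hpre : (w ++ [a]) <+: w' := htake ▸ List.take_prefix (m + 1) w'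
          obtain ⟨b, hb⟩ := hinfE.nonempty
          exact haE (Epoint hpre ⟨b, hb⟩)
    · refine IsOpen.inter (isOpen_biInter_finset fun i hi => ?_) (isOpen_eval_V m _ hEfin)
      obtain ⟨a, ha⟩ : ∃ a : A, x i = (a : OnePoint A) := by
        have hs := hsome i (Finset.mem_range.1 hi)
        rw [Option.isSome_iff_exists] at hs
        obtain ⟨a, ha⟩ := hs
        exact ⟨a, ha⟩
      rw [ha]
      exact isOpen_eval_eq i a
    · constructor
      · simp only [Set.mem_iInter]
        intros
        rfl
      · exact Or.inl hm
  · -- x never reaches infinity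
    push_neg at hinf
    have hnoinf : ∀ n : ℕ, ¬ ∃ i ≤ n, x i = OnePoint.infty := by
      rintro n ⟨i, _, hxi⟩
      exact hinf i hxi
    have hQn : ∀ n, (Q x).1 n = toOpt (x n) := fun n => Q_apply_neg x n (hnoinf n)
    have hlen : len (Q x) = ⊤ :=
      len_eq_top_iff.2 fun k hk => hinf k (toOpt_eq_none.1 ((hQn k) ▸ hk))
    have hforb : ∃ u ∈ F, IsSubblock u (Q x) := by
      by_contra hcon
      push_neg at hcon
      exact hx' (Or.inl ⟨hlen, hcon⟩)
    obtain ⟨u, hu, k, hk⟩ := hforb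
    refine ⟨⋂ i ∈ Finset.range (k + u.length + 1), {x' : XA A | x' i = x i}, ?_, ?_, ?_⟩
    · intro x' hx'U
      simp only [Set.mem_iInter] at hx'U
      have hx'i : ∀ i, i ≤ k + u.length → x' i = x i :=
        fun i hi => hx'U i (Finset.mem_range.2 (by omega))
      have hnoinf' : ∀ n, n ≤ k + u.length → ¬ ∃ i ≤ n, x' i = OnePoint.infty := by
        rintro n hn ⟨i, hi, hxi⟩
        exact hinf i (by rw [← hx'i i (by omega)]; exact hxi)
      have hsub' : IsSubblock u (Q x') := by
        refine ⟨k, fun i hi => ?_⟩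
        have h1 : k + i ≤ k + u.length := by omega
        rw [Q_apply_neg x' (k + i) (hnoinf' _ h1), hx'i _ h1, ← hQn (k + i)]
        exact hk i hi
      show Q x' ∉ XF F
      rintro (h | ⟨w', hw', hinfE⟩)
      · exact h.2 u hu hsub'
      · rw [hw'] at hsub'
        have hempty := XFinf_cyl_empty hu hsub'
        obtain ⟨a, y, hy1, hy2⟩ := hinfE.nonempty
        have hmem : y ∈ XFinf F ∩ cyl w' := ⟨hy1, cyl_mono (w'.prefix_append [a]) hy2⟩
        rw [hempty] at hmem
        exact hmem
    · refine isOpen_biInter_finset fun i _ => ?_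
      obtain ⟨a, ha⟩ : ∃ a : A, x i = (a : OnePoint A) := by
        cases h : x i with
        | infty => exact absurd h (hinf i)
        | coe a => exact ⟨a, rfl⟩
      rw [ha]
      exact isOpen_eval_eq i a
    · simp only [Set.mem_iInter]
      intros
      rfl

lemma XF_main (A : Type*) (F : Set (List A)) : IsShiftSpace (XF F) := by
  refine ⟨XF_closed, ?_, ?_⟩
  · rintro x (hx | ⟨w, rfl, hE⟩)
    · exact Or.inl (shift_mem_XFinf hx)
    · rcases w with _ | ⟨b, u⟩
      · refine Or.inr ⟨[], ?_, hE⟩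
        apply Subtype.ext; funext n
        show ([] : List A)[n + 1]? = ([] : List A)[n]?
        simp
      · refine Or.inr ⟨u, shift_ofList_cons b u, hE.mono ?_⟩
        rintro a ⟨y, hy1, hy2⟩
        refine ⟨shift y, shift_mem_XFinf hy1, fun i hi => ?_⟩
        show y.1 (i + 1) = (u ++ [a])[i]?
        have hlt : i + 1 < ((b :: u) ++ [a]).length := by
          simp only [List.length_append, List.length_cons, List.length_singleton] at hi ⊢
          omega
        rw [hy2 (i + 1) hlt]
        show ((b :: u) ++ [a])[i + 1]? = (u ++ [a])[i]?
        simp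
  · intro w hw
    rcases hw with hx | ⟨w', hww', hE⟩
    · exact absurd hx.1 (len_ofList_ne_top w)
    · obtain rfl := ofList_inj hww'
      refine hE.mono fun a ha => ?_
      obtain ⟨y, hy1, hy2⟩ := ha
      exact ⟨y, Or.inl hy1, hy2⟩

end Sig

/-- for any set of forbidden blocks `F`, the set `X_F` is a shift
space: closed, shift invariant, and with the infinite-extension property. -/
theorem stmt10 (A : Type*) (F : Set (List A)) : Sig.IsShiftSpace (Sig.XF F) :=
  Sig.XF_main A F
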